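/- For 0 < δ < 1, the function I_δ(θ,r) = cos(πr) + δ cos(π(2θ - r)) is invariant under the Suris map f_δ(θ,r) = (θ + r + V_δ'(θ), r + V_δ'(θ)), i.e. I_δ(f_δ(θ,r)) = I_δ(θ,r) for all (θ,r). -/

import Mathlib

noncomputable def V' (δ θ : ℝ) : ℝ :=
  -(2 / Real.pi) * Real.arctan
    (δ * Real.sin (2 * Real.pi * θ) / (1 + δ * Real.cos (2 * Real.pi * θ)))

noncomputable def surisMap (δ : ℝ) (z : ℝ × ℝ) : ℝ × ℝ :=
  (z.1 + z.2 + V' δ z.1, z.2 + V' δ z.1)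

noncomputable def I (δ : ℝ) (z : ℝ × ℝ) : ℝ :=
  Real.cos (Real.pi * z.2) + δ * Real.cos (Real.pi * (2 * z.1 - z.2))

lemma key_rot (A B x : ℝ) (hA : 0 < A) :
    A * Real.cos (x - 2 * Real.arctan (B / A)) -
      B * Real.sin (x - 2 * Real.arctan (B / A)) =
    A * Real.cos x + B * Real.sin x := by
  set β := Real.arctan (B / A) with hβ
  have hc : 0 < Real.cos β := Real.cos_arctan_pos _
  have hB : B = A * (Real.sin β / Real.cos β) := by
    have ht : Real.tan β = B / A := Real.tan_arctan _
    rw [Real.tan_eq_sin_div_cos] at ht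
    field_simp at ht ⊢
    linarith [ht]
  have hpyth : Real.sin β ^ 2 + Real.cos β ^ 2 = 1 := Real.sin_sq_add_cos_sq β
  rw [hB, Real.cos_sub, Real.sin_sub, Real.cos_two_mul, Real.sin_two_mul]
  field_simp
  linear_combination (2 * Real.cos β * Real.cos x) * hpyth

theorem suris_integrable (δ : ℝ) (hδ : 0 < δ) (hδ1 : δ < 1) (z : ℝ × ℝ) :
    I δ (surisMap δ z) = I δ z := by
  obtain ⟨θ, r⟩ := z
  simp only [I, surisMap, V']
  have hπ : Real.pi ≠ 0 := Real.pi_ne_zero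
  set φ := 2 * Real.pi * θ with hφ
  set β := Real.arctan (δ * Real.sin φ / (1 + δ * Real.cos φ)) with hβdef
  set A := 1 + δ * Real.cos φ with hA
  set B := δ * Real.sin φ with hB
  have hApos : 0 < A := by
    have := Real.neg_one_le_cos φ
    nlinarith
  set x := Real.pi * r with hx
  have h1 : Real.pi * (r + -(2 / Real.pi) * β) = x - 2 * β := by
    field_simp; ring
  have h2 : Real.pi * (2 * (θ + r + -(2 / Real.pi) * β) - (r + -(2 / Real.pi) * β))
      = φ + (x - 2 * β) := by
    field_simp [hφ, hx]; ring
  have h3 : Real.pi * (2 * θ - r) = φ - x := by rw [hφ, hx]; ring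
  rw [h1, h2, h3, Real.cos_add φ (x - 2 * β), Real.cos_sub φ x]
  have key := key_rot A B x hApos
  rw [show B / A = δ * Real.sin φ / (1 + δ * Real.cos φ) by rw [hA, hB]] at key
  rw [← hβdef] at key
  rw [hA, hB] at key
  linear_combination key
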